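/- Let l ≥ 2 be even and S = {i_1 < ⋯ < i_k} ⊆ {1,…,l} with k ≥ 1. Consider the linear system in unknowns x_1,…,x_k: x_j + x_{j+1} + (i_{j+1} − i_j) = 0 for j = 1,…,k−1, together with −i_1 x_1 − i_2 x_2 − ⋯ − i_{k−1} x_{k−1} + ((l − 2 i_k + 1)/2) x_k + (l+1)²/4 − i_k (l+1)/2 = 0. This system has a unique solution, given by x_j = Σ_{s=j+1}^{k} (−1)^{s−j} i_s + Σ_{s=1}^{j−1} (−1)^{j−s+1} i_s + (−1)^{k−j+1}(l+1)/2. -/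
import Mathlib


/-- The value `h_{i_j}` attached (by the alternating-sum formula) to the `j`-th element
(1-based) of the subset `S = {idx 1 < idx 2 < ⋯ < idx k} ⊆ {1,…,l}`. -/
noncomputable def Hval (l k : ℕ) (idx : ℕ → ℕ) (j : ℕ) : ℚ :=
  (∑ s ∈ Finset.Icc (j + 1) k, (-1 : ℚ) ^ (s - j) * (idx s : ℚ))
    + (∑ s ∈ Finset.Icc 1 (j - 1), (-1 : ℚ) ^ (j - s + 1) * (idx s : ℚ))
    + (-1 : ℚ) ^ (k - j + 1) * ((l : ℚ) + 1) / 2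

/-- The linear system of STATEMENT 16, for unknowns `x 1, …, x k` (we normalize
`x j = 0` off `{1,…,k}`): the consecutive relations `x_j + x_{j+1} + (i_{j+1} − i_j) = 0`
for `j = 1,…,k−1`, together with
`−i_1 x_1 − ⋯ − i_{k−1} x_{k−1} + ((l − 2 i_k + 1)/2) x_k + (l+1)²/4 − i_k (l+1)/2 = 0`. -/
def IsSystemSolution (l k : ℕ) (idx : ℕ → ℕ) (x : ℕ → ℚ) : Prop :=
  (∀ j, j ∉ Finset.Icc 1 k → x j = 0) ∧
  (∀ j, 1 ≤ j → j < k → x j + x (j + 1) + ((idx (j + 1) : ℚ) - (idx j : ℚ)) = 0) ∧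
  (-(∑ j ∈ Finset.Icc 1 (k - 1), (idx j : ℚ) * x j)
    + ((l : ℚ) - 2 * (idx k : ℚ) + 1) / 2 * x k
    + ((l : ℚ) + 1) ^ 2 / 4 - (idx k : ℚ) * ((l : ℚ) + 1) / 2 = 0)

lemma negOnePow_congr (a b : ℕ) (h : a % 2 = b % 2) : ((-1:ℚ))^a = (-1)^b := by
  conv_lhs => rw [← Nat.div_add_mod a 2]
  conv_rhs => rw [← Nat.div_add_mod b 2]
  rw [pow_add, pow_add, pow_mul, pow_mul, h]
  norm_num

noncomputable def Qv (idx : ℕ → ℕ) (m : ℕ) : ℚ :=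
  ∑ s ∈ Finset.Icc 1 m, (-1:ℚ)^(m+s) * (idx s : ℚ)

lemma Qv_zero (idx : ℕ → ℕ) : Qv idx 0 = 0 := by simp [Qv]

lemma Qv_succ (idx : ℕ → ℕ) (m : ℕ) : Qv idx (m+1) = (idx (m+1) : ℚ) - Qv idx m := by
  unfold Qv
  rw [Finset.sum_Icc_succ_top (by omega : 1 ≤ m + 1)]
  have h1 : ∀ s ∈ Finset.Icc 1 m, (-1:ℚ)^(m+1+s) * (idx s : ℚ)
      = -((-1:ℚ)^(m+s) * (idx s : ℚ)) := by
    intro s _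
    rw [show m+1+s = (m+s)+1 by ring, pow_succ]; ring
  rw [Finset.sum_congr rfl h1, Finset.sum_neg_distrib]
  have h2 : (-1:ℚ)^(m+1+(m+1)) = 1 := Even.neg_one_pow ⟨m+1, by ring⟩
  rw [h2]; ring

lemma Qv_pred (idx : ℕ → ℕ) (j : ℕ) (hj : 1 ≤ j) :
    Qv idx j = (idx j : ℚ) - Qv idx (j-1) := by
  obtain ⟨m, rfl⟩ : ∃ m, j = m + 1 := ⟨j - 1, by omega⟩
  simpa using Qv_succ idx m

lemma Qv_int (idx : ℕ → ℕ) (m : ℕ) : ∃ z : ℤ, Qv idx m = (z : ℚ) := by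
  induction m with
  | zero => exact ⟨0, by simp [Qv_zero]⟩
  | succ n ih =>
    obtain ⟨z, hz⟩ := ih
    exact ⟨(idx (n+1) : ℤ) - z, by rw [Qv_succ, hz]; push_cast; ring⟩

lemma sum_alt (idx : ℕ → ℕ) (k : ℕ) (hk : 1 ≤ k) :
    ∑ j ∈ Finset.Icc 1 (k-1), (-1:ℚ)^(k+j) * (idx j : ℚ) = -Qv idx (k-1) := by
  unfold Qv
  rw [← Finset.sum_neg_distrib]
  refine Finset.sum_congr rfl fun j hj => ?_
  have : (-1:ℚ)^(k+j) = -(-1:ℚ)^(k-1+j) := by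
    rw [show k+j = (k-1+j)+1 by omega, pow_succ]; ring
  rw [this]; ring

lemma sum_sq (idx : ℕ → ℕ) (m : ℕ) :
    ∑ j ∈ Finset.Icc 1 m, (idx j : ℚ) * (2 * Qv idx (j-1) - (idx j : ℚ)) = -(Qv idx m)^2 := by
  induction m with
  | zero => simp [Qv_zero]
  | succ n ih =>
    rw [Finset.sum_Icc_succ_top (by omega : 1 ≤ n + 1), ih, Qv_succ]
    simp only [Nat.add_sub_cancel]
    ring

lemma Qv_split (idx : ℕ → ℕ) (j k : ℕ) (hjk : j ≤ k) :
    Qv idx k = (-1:ℚ)^(k+j) * Qv idx j + ∑ s ∈ Finset.Icc (j+1) k, (-1:ℚ)^(k+s) * (idx s : ℚ) := by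
  unfold Qv
  rw [Finset.mul_sum]
  have h1 : ∀ s ∈ Finset.Icc 1 j, (-1:ℚ)^(k+j) * ((-1:ℚ)^(j+s) * (idx s : ℚ))
      = (-1:ℚ)^(k+s) * (idx s : ℚ) := by
    intro s hs
    rw [← mul_assoc, ← pow_add, negOnePow_congr (k+j+(j+s)) (k+s) (by omega)]
  rw [Finset.sum_congr rfl h1]
  rw [show Finset.Icc 1 j = Finset.Ioc 0 j from Finset.Icc_add_one_left_eq_Ioc 0 j,
      show Finset.Icc (j+1) k = Finset.Ioc j k from Finset.Icc_add_one_left_eq_Ioc j k,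
      show Finset.Icc 1 k = Finset.Ioc 0 k from Finset.Icc_add_one_left_eq_Ioc 0 k]
  exact (Finset.sum_Ioc_consecutive _ (Nat.zero_le j) hjk).symm


lemma Hval_eq (l k : ℕ) (idx : ℕ → ℕ) (j : ℕ) (h1 : 1 ≤ j) (h2 : j ≤ k) :
    Hval l k idx j = (-1:ℚ)^(k+j) * (Qv idx k - ((l:ℚ)+1)/2) - (idx j : ℚ)
      + 2 * Qv idx (j-1) := by
  unfold Hval
  have hS1 : ∑ s ∈ Finset.Icc (j+1) k, (-1:ℚ)^(s-j) * (idx s : ℚ)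
      = (-1:ℚ)^(k+j) * Qv idx k - Qv idx j := by
    have e1 : ∀ s ∈ Finset.Icc (j+1) k, (-1:ℚ)^(s-j) * (idx s : ℚ)
        = (-1:ℚ)^(k+j) * ((-1:ℚ)^(k+s) * (idx s : ℚ)) := by
      intro s hs
      simp only [Finset.mem_Icc] at hs
      rw [← mul_assoc, ← pow_add, negOnePow_congr (s-j) (k+j+(k+s)) (by omega)]
    rw [Finset.sum_congr rfl e1, ← Finset.mul_sum, Qv_split idx j k h2]
    have hsq : (-1:ℚ)^(k+j) * (-1:ℚ)^(k+j) = 1 := by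
      rw [← pow_add]; exact Even.neg_one_pow ⟨k+j, by ring⟩
    linear_combination (-Qv idx j) * hsq
  have hS2 : ∑ s ∈ Finset.Icc 1 (j-1), (-1:ℚ)^(j-s+1) * (idx s : ℚ) = Qv idx (j-1) := by
    unfold Qv
    refine Finset.sum_congr rfl fun s hs => ?_
    simp only [Finset.mem_Icc] at hs
    rw [negOnePow_congr (j-s+1) (j-1+s) (by omega)]
  have hS3 : (-1:ℚ)^(k-j+1) = -(-1:ℚ)^(k+j) := by
    rw [negOnePow_congr (k-j+1) (k+j+1) (by omega), pow_succ]; ring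
  rw [hS1, hS2, hS3, Qv_pred idx j h1]
  ring

lemma Hval_rec (l k : ℕ) (idx : ℕ → ℕ) (j : ℕ) (h1 : 1 ≤ j) (h2 : j < k) :
    Hval l k idx j + Hval l k idx (j+1) + ((idx (j+1) : ℚ) - (idx j : ℚ)) = 0 := by
  rw [Hval_eq l k idx j h1 (le_of_lt h2), Hval_eq l k idx (j+1) (by omega) (by omega)]
  simp only [Nat.add_sub_cancel]
  rw [Qv_pred idx j h1, show k+(j+1) = (k+j)+1 by ring, pow_succ]
  ring

lemma Hval_last (l k : ℕ) (idx : ℕ → ℕ) (hk : 1 ≤ k) :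
    Hval l k idx k = Qv idx (k-1) - ((l:ℚ)+1)/2 := by
  rw [Hval_eq l k idx k hk le_rfl, Qv_pred idx k hk,
      Even.neg_one_pow (⟨k, by ring⟩ : Even (k+k))]
  ring

/-- For `l ≥ 2` even, `k ≥ 1` and `i_1 < ⋯ < i_k` in `{1,…,l}`, the linear
system has a unique solution, given by the alternating-sum formula
`x_j = Σ_{s=j+1}^{k} (−1)^{s−j} i_s + Σ_{s=1}^{j−1} (−1)^{j−s+1} i_s + (−1)^{k−j+1}(l+1)/2`. -/
theorem linear_system_unique_solution (l k : ℕ) (hl2 : 2 ≤ l) (hleven : Even l) (hk : 1 ≤ k)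
    (idx : ℕ → ℕ) (hmono : StrictMonoOn idx (Set.Icc 1 k))
    (hrange : ∀ j ∈ Finset.Icc 1 k, idx j ∈ Finset.Icc 1 l) :
    IsSystemSolution l k idx (fun j => if j ∈ Finset.Icc 1 k then Hval l k idx j else 0) ∧
    ∀ x : ℕ → ℚ, IsSystemSolution l k idx x →
      x = fun j => if j ∈ Finset.Icc 1 k then Hval l k idx j else 0 := by
  classical
  have hkk : k ∈ Finset.Icc 1 k := Finset.mem_Icc.mpr ⟨hk, le_rfl⟩
  have hrec : ∀ j, 1 ≤ j → j < k →
      (if j ∈ Finset.Icc 1 k then Hval l k idx j else 0)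
        + (if j+1 ∈ Finset.Icc 1 k then Hval l k idx (j+1) else 0)
        + ((idx (j+1):ℚ) - (idx j : ℚ)) = 0 := by
    intro j h1 h2
    rw [if_pos (Finset.mem_Icc.mpr ⟨h1, by omega⟩),
        if_pos (Finset.mem_Icc.mpr ⟨by omega, by omega⟩)]
    exact Hval_rec l k idx j h1 h2
  have hsumH : ∑ j ∈ Finset.Icc 1 (k-1),
        (idx j:ℚ) * (if j ∈ Finset.Icc 1 k then Hval l k idx j else 0)
      = (Qv idx k - ((l:ℚ)+1)/2) * (∑ j ∈ Finset.Icc 1 (k-1), (-1:ℚ)^(k+j) * (idx j : ℚ))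
        + ∑ j ∈ Finset.Icc 1 (k-1), (idx j:ℚ) * (2 * Qv idx (j-1) - (idx j : ℚ)) := by
    rw [Finset.mul_sum, ← Finset.sum_add_distrib]
    refine Finset.sum_congr rfl fun j hj => ?_
    simp only [Finset.mem_Icc] at hj
    rw [if_pos (Finset.mem_Icc.mpr ⟨hj.1, by omega⟩), Hval_eq l k idx j hj.1 (by omega)]
    ring
  have hbig : -(∑ j ∈ Finset.Icc 1 (k-1),
        (idx j : ℚ) * (if j ∈ Finset.Icc 1 k then Hval l k idx j else 0))
      + ((l:ℚ) - 2 * (idx k : ℚ) + 1)/2 * (if k ∈ Finset.Icc 1 k then Hval l k idx k else 0)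
      + ((l:ℚ)+1)^2/4 - (idx k:ℚ) * ((l:ℚ)+1)/2 = 0 := by
    rw [if_pos hkk, Hval_last l k idx hk, hsumH, sum_alt idx k hk, sum_sq idx (k-1),
        Qv_pred idx k hk]
    ring
  refine ⟨⟨fun j hj => if_neg hj, hrec, hbig⟩, ?_⟩
  intro x hx
  obtain ⟨hx0, hxrec, hxbig⟩ := hx
  have hd : ∀ j, 1 ≤ j → j ≤ k →
      x j - Hval l k idx j = (-1:ℚ)^(k+j) * (x k - Hval l k idx k) := by
    have key : ∀ t j, j + t = k → 1 ≤ j →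
        x j - Hval l k idx j = (-1:ℚ)^t * (x k - Hval l k idx k) := by
      intro t
      induction t with
      | zero =>
        intro j hj h1
        obtain rfl : j = k := by omega
        simp
      | succ t ih =>
        intro j hj h1
        have h2 : j < k := by omega
        have e1 := hxrec j h1 h2
        have e2 := Hval_rec l k idx j h1 h2
        have e3 := ih (j+1) (by omega) (by omega)
        rw [pow_succ]
        linear_combination e1 - e2 - e3
    intro j h1 h2
    rw [← negOnePow_congr (k-j) (k+j) (by omega)]
    exact key (k-j) j (by omega) h1
  have hdk : x k - Hval l k idx k = 0 := by
    have hsplit : ∑ j ∈ Finset.Icc 1 (k-1), (idx j:ℚ) * x j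
        = (∑ j ∈ Finset.Icc 1 (k-1),
            (idx j:ℚ) * (if j ∈ Finset.Icc 1 k then Hval l k idx j else 0))
          + (x k - Hval l k idx k)
            * (∑ j ∈ Finset.Icc 1 (k-1), (-1:ℚ)^(k+j) * (idx j : ℚ)) := by
      rw [Finset.mul_sum, ← Finset.sum_add_distrib]
      refine Finset.sum_congr rfl fun j hj => ?_
      simp only [Finset.mem_Icc] at hj
      rw [if_pos (Finset.mem_Icc.mpr ⟨hj.1, by omega⟩)]
      have hdj := hd j hj.1 (by omega)
      linear_combination (idx j : ℚ) * hdj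
    have heq : (x k - Hval l k idx k) * (((l:ℚ)+1)/2 - Qv idx k) = 0 := by
      have h1 := hxbig
      rw [hsplit, sum_alt idx k hk] at h1
      have h2 := hbig
      rw [if_pos hkk] at h2
      rw [Qv_pred idx k hk]
      linear_combination h1 - h2
    have hne : ((l:ℚ)+1)/2 - Qv idx k ≠ 0 := by
      obtain ⟨z, hz⟩ := Qv_int idx k
      rw [hz]
      intro h
      have hcast : (l:ℚ) = 2*(z:ℚ) - 1 := by linarith
      have hl : (l:ℤ) = 2*z - 1 := by exact_mod_cast hcast
      obtain ⟨m, hm⟩ := hleven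
      omega
    rcases mul_eq_zero.mp heq with h | h
    · exact h
    · exact absurd h hne
  funext j
  show x j = if j ∈ Finset.Icc 1 k then Hval l k idx j else 0
  by_cases hj : j ∈ Finset.Icc 1 k
  · rw [if_pos hj]
    simp only [Finset.mem_Icc] at hj
    have hdj := hd j hj.1 hj.2
    rw [hdk, mul_zero] at hdj
    linarith
  · rw [if_neg hj]
    exact hx0 j hj
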